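/- arXiv:2604.13239 — 2 statements merged into one kernel-verified Lean document; each statement's English description precedes it below -/
import Mathlib

section
/- Let T₁, …, Tₙ be bounded linear operators on a complex Hilbert space H. Define the real n×n matrices a and b by a_{jk} = √‖T_j T_k*‖ and b_{jk} = √‖T_j* T_k‖ for j,k = 1,…,n. Then ‖∑_{k=1}^n T_k‖² ≤ ‖a‖ · ‖b‖, where ‖a‖ and ‖b‖ denote the operator norms of the matrices a and b acting on the Euclidean space ℂⁿ (equivalently ℝⁿ), and ‖·‖ on operators denotes the operator norm. -/
/-!
For `x₁, …, xₙ` in a C*-ring put `S = ∑ xᵢ`, `u_j = √‖x_j‖`. Expanding `(S S*)^m` gives the words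
`x_{j₁} x_{k₁}* ⋯ x_{jₘ} x_{kₘ}*`. Grouped as `(x_{j₁} x_{k₁}*) ⋯ (x_{jₘ} x_{kₘ}*)` a word has norm
at most `∏ a_{jᵢkᵢ}²`; grouped as `x_{j₁} (x_{k₁}* x_{j₂}) ⋯ (x_{kₘ₋₁}* x_{jₘ}) x_{kₘ}*` at most
`‖x_{j₁}‖ ∏ b_{kᵢjᵢ₊₁}² ‖x_{kₘ}‖`. The geometric mean of the two bounds is the path weight
`u_{j₁} a_{j₁k₁} b_{k₁j₂} ⋯ a_{jₘkₘ} u_{kₘ}`, and these weights sum to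
`u ⬝ a (b a)^(m-1) u ≤ ‖a‖^m ‖b‖^(m-1) ∑ ‖x_j‖ ≤ n (‖a‖ ‖b‖)^m`, because `‖x_j‖ = b_{jj} ≤ ‖b‖`.
For `m = 2^k` the C*-identity gives `‖(S S*)^m‖ = ‖S‖^(2m)`, and letting `k → ∞` the factor `n`
disappears.
-/

open Filter

theorem Fintype.sum_ofFn_succ {κ M : Type*} [Fintype κ] [AddCommMonoid M] (m : ℕ)
    (g : List κ → M) :
    ∑ w : Fin (m + 1) → κ, g (List.ofFn w) = ∑ p, ∑ w : Fin m → κ, g (p :: List.ofFn w) := by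
  rw [← (Fin.consEquiv fun _ => κ).sum_comp, Fintype.sum_prod_type]
  simp only [Fin.consEquiv, Equiv.coe_fn_mk, List.ofFn_cons]

theorem Fintype.sum_pow_eq_sum_prod_ofFn {κ R : Type*} [Fintype κ] [Semiring R] (f : κ → R)
    (m : ℕ) : (∑ p, f p) ^ m = ∑ w : Fin m → κ, ((List.ofFn w).map f).prod := by
  induction m with
  | zero => simp
  | succ m ih =>
    rw [pow_succ', ih, Fintype.sum_ofFn_succ m fun l => (l.map f).prod, Finset.sum_mul_sum]
    simp only [List.map_cons, List.prod_cons]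

theorem norm_mul_mul_pow_le {R : Type*} [NormedRing R] (x y : R) (m : ℕ) :
    ‖x * (y * x) ^ m‖ ≤ ‖x‖ ^ (m + 1) * ‖y‖ ^ m := by
  induction m with
  | zero => simp
  | succ m ih =>
    calc ‖x * (y * x) ^ (m + 1)‖ = ‖x * (y * x) ^ m * y * x‖ := by
          simp only [pow_succ, mul_assoc]
      _ ≤ ‖x * (y * x) ^ m‖ * ‖y‖ * ‖x‖ := by
          grw [norm_mul_le, norm_mul_le]
      _ ≤ ‖x‖ ^ (m + 1) * ‖y‖ ^ m * ‖y‖ * ‖x‖ := by gcongr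
      _ = ‖x‖ ^ (m + 1 + 1) * ‖y‖ ^ (m + 1) := by ring

theorem le_of_frequently_pow_le_mul_pow {r L C : ℝ} (hL : 0 ≤ L)
    (h : ∃ᶠ N in atTop, r ^ N ≤ C * L ^ N) : r ≤ L := by
  by_contra! hLr
  have hr : 0 < r := hL.trans_lt hLr
  have hsmall : ∀ᶠ N in atTop, C * (L / r) ^ N < 1 := by
    have := (tendsto_pow_atTop_nhds_zero_of_lt_one (div_nonneg hL hr.le)
      ((div_lt_one hr).2 hLr)).const_mul C
    rw [mul_zero] at this
    exact this.eventually (gt_mem_nhds one_pos)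
  obtain ⟨N, hN, hNsmall⟩ := (h.and_eventually hsmall).exists
  rw [div_pow, mul_div_assoc', div_lt_one (pow_pos hr N)] at hNsmall
  exact hNsmall.not_ge hN

namespace Matrix

open scoped RealInnerProductSpace

variable {ι : Type*} [Fintype ι] [DecidableEq ι]

theorem dotProduct_mulVec_le_norm_toEuclideanCLM (M : Matrix ι ι ℝ) (u : ι → ℝ) :
    u ⬝ᵥ M *ᵥ u ≤ ‖toEuclideanCLM (𝕜 := ℝ) M‖ * ∑ i, u i ^ 2 := by
  set v : EuclideanSpace ℝ ι := WithLp.toLp 2 u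
  have hv : ‖v‖ ^ 2 = ∑ i, u i ^ 2 := by
    simp [v, EuclideanSpace.norm_sq_eq]
  calc u ⬝ᵥ M *ᵥ u = ⟪v, toEuclideanCLM (𝕜 := ℝ) M v⟫ := (inner_toEuclideanCLM M v v).symm
    _ ≤ ‖v‖ * ‖toEuclideanCLM (𝕜 := ℝ) M v‖ := real_inner_le_norm _ _
    _ ≤ ‖v‖ * (‖toEuclideanCLM (𝕜 := ℝ) M‖ * ‖v‖) := by
        gcongr; exact ContinuousLinearMap.le_opNorm _ _
    _ = ‖toEuclideanCLM (𝕜 := ℝ) M‖ * ∑ i, u i ^ 2 := by rw [← hv]; ring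

theorem apply_self_le_norm_toEuclideanCLM (M : Matrix ι ι ℝ) (i : ι) :
    M i i ≤ ‖toEuclideanCLM (𝕜 := ℝ) M‖ := by
  simpa [Pi.single_apply] using dotProduct_mulVec_le_norm_toEuclideanCLM M (Pi.single i 1)

end Matrix

noncomputable section

namespace CotlarStein

open Matrix

variable {ι R : Type*} [NormedRing R] [StarRing R]

def sqrtNormMulStar (x : ι → R) : Matrix ι ι ℝ := of fun j k => √‖x j * star (x k)‖

def sqrtNormStarMul (x : ι → R) : Matrix ι ι ℝ := of fun j k => √‖star (x j) * x k‖

def wordProd (x : ι → R) (w : List (ι × ι)) : R := (w.map fun p => x p.1 * star (x p.2)).prod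

def wordNormProd (x : ι → R) (w : List (ι × ι)) : ℝ :=
  (w.map fun p => ‖x p.1 * star (x p.2)‖).prod

def chainBound (x : ι → R) : ι → List (ι × ι) → ℝ
  | k, [] => ‖x k‖
  | k, q :: w => ‖star (x k) * x q.1‖ * chainBound x q.2 w

def pathWeight (x : ι → R) : ι → List (ι × ι) → ℝ
  | k, [] => √‖x k‖
  | k, q :: w => sqrtNormStarMul x k q.1 * sqrtNormMulStar x q.1 q.2 * pathWeight x q.2 w

variable (x : ι → R)

theorem norm_wordProd_cons_le (p : ι × ι) (w : List (ι × ι)) :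
    ‖wordProd x (p :: w)‖ ≤ wordNormProd x (p :: w) := by
  simpa [wordProd, wordNormProd, Function.comp_def] using List.norm_prod_le' (List.cons_ne_nil _ _)
    (l := (p :: w).map fun p => x p.1 * star (x p.2))

theorem norm_star_mul_wordProd_le [NormedStarGroup R] (k : ι) (w : List (ι × ι)) :
    ‖star (x k) * wordProd x w‖ ≤ chainBound x k w := by
  induction w generalizing k with
  | nil => simp [wordProd, chainBound]
  | cons q w ih =>
    calc ‖star (x k) * wordProd x (q :: w)‖
        = ‖(star (x k) * x q.1) * (star (x q.2) * wordProd x w)‖ := by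
          simp only [wordProd, List.map_cons, List.prod_cons, mul_assoc]
      _ ≤ ‖star (x k) * x q.1‖ * ‖star (x q.2) * wordProd x w‖ := norm_mul_le _ _
      _ ≤ chainBound x k (q :: w) := by rw [chainBound]; gcongr; exact ih q.2

theorem norm_wordProd_cons_le_chainBound [NormedStarGroup R] (p : ι × ι) (w : List (ι × ι)) :
    ‖wordProd x (p :: w)‖ ≤ ‖x p.1‖ * chainBound x p.2 w := by
  calc ‖wordProd x (p :: w)‖ = ‖x p.1 * (star (x p.2) * wordProd x w)‖ := by
        simp only [wordProd, List.map_cons, List.prod_cons, mul_assoc]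
    _ ≤ ‖x p.1‖ * chainBound x p.2 w := by
        grw [norm_mul_le, norm_star_mul_wordProd_le]

theorem pathWeight_nonneg (k : ι) (w : List (ι × ι)) : 0 ≤ pathWeight x k w := by
  induction w generalizing k with
  | nil => exact Real.sqrt_nonneg _
  | cons q w ih =>
    exact mul_nonneg (by simp only [sqrtNormStarMul, sqrtNormMulStar, of_apply]; positivity)
      (ih q.2)

theorem pathWeight_sq (k : ι) (w : List (ι × ι)) :
    pathWeight x k w ^ 2 = wordNormProd x w * chainBound x k w := by
  induction w generalizing k with
  | nil => simp [pathWeight, wordNormProd, chainBound]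
  | cons q w ih =>
    simp only [pathWeight, chainBound, wordNormProd, sqrtNormStarMul, sqrtNormMulStar,
      of_apply, List.map_cons, List.prod_cons, mul_pow, ih, Real.sq_sqrt (norm_nonneg _)]
    ring

theorem norm_wordProd_cons_le_pathWeight [NormedStarGroup R] (p : ι × ι) (w : List (ι × ι)) :
    ‖wordProd x (p :: w)‖ ≤ √‖x p.1‖ * sqrtNormMulStar x p.1 p.2 * pathWeight x p.2 w := by
  have hA := norm_wordProd_cons_le x p w
  have hB := norm_wordProd_cons_le_chainBound x p w
  have hnonneg : 0 ≤ √‖x p.1‖ * sqrtNormMulStar x p.1 p.2 * pathWeight x p.2 w :=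
    mul_nonneg (by simp only [sqrtNormMulStar, of_apply]; positivity)
      (pathWeight_nonneg x _ _)
  refine (pow_le_pow_iff_left₀ (norm_nonneg _) hnonneg two_ne_zero).1 ?_
  calc ‖wordProd x (p :: w)‖ ^ 2
      ≤ wordNormProd x (p :: w) * (‖x p.1‖ * chainBound x p.2 w) := by
        rw [sq]; exact mul_le_mul hA hB (norm_nonneg _) ((norm_nonneg _).trans hA)
    _ = (√‖x p.1‖ * sqrtNormMulStar x p.1 p.2 * pathWeight x p.2 w) ^ 2 := by
        simp only [mul_pow, pathWeight_sq, sqrtNormMulStar, of_apply,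
          Real.sq_sqrt (norm_nonneg _), wordNormProd, List.map_cons, List.prod_cons]
        ring

theorem sqrtNormStarMul_apply_self [CStarRing R] (j : ι) : sqrtNormStarMul x j j = ‖x j‖ := by
  rw [sqrtNormStarMul, of_apply, CStarRing.norm_star_mul_self, Real.sqrt_mul_self (norm_nonneg _)]

variable [Fintype ι] [DecidableEq ι]

theorem sum_pathWeight (m : ℕ) (k : ι) :
    ∑ w : Fin m → ι × ι, pathWeight x k (List.ofFn w)
      = ((sqrtNormStarMul x * sqrtNormMulStar x) ^ m *ᵥ fun j => √‖x j‖) k := by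
  induction m generalizing k with
  | zero => simp [pathWeight]
  | succ m ih =>
    rw [Fintype.sum_ofFn_succ m (pathWeight x k)]
    simp only [pathWeight, ← Finset.mul_sum, ih, pow_succ', ← mulVec_mulVec]
    simp only [mulVec, dotProduct, Finset.mul_sum, Fintype.sum_prod_type, mul_assoc]

theorem norm_mul_star_pow_succ_le [NormedStarGroup R] (m : ℕ) :
    ‖((∑ i, x i) * star (∑ i, x i)) ^ (m + 1)‖
      ≤ (fun j => √‖x j‖) ⬝ᵥ (sqrtNormMulStar x * (sqrtNormStarMul x * sqrtNormMulStar x) ^ m)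
          *ᵥ fun j => √‖x j‖ := by
  have hQ : (∑ i, x i) * star (∑ i, x i) = ∑ p : ι × ι, x p.1 * star (x p.2) := by
    rw [star_sum, Finset.sum_mul_sum, Fintype.sum_prod_type]
  rw [hQ, Fintype.sum_pow_eq_sum_prod_ofFn, Fintype.sum_ofFn_succ m fun w => (w.map _).prod]
  calc ‖∑ p : ι × ι, ∑ w : Fin m → ι × ι, wordProd x (p :: List.ofFn w)‖
      ≤ ∑ p : ι × ι, ∑ w : Fin m → ι × ι, ‖wordProd x (p :: List.ofFn w)‖ :=
        (norm_sum_le _ _).trans (Finset.sum_le_sum fun p _ => norm_sum_le _ _)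
    _ ≤ ∑ p : ι × ι, ∑ w : Fin m → ι × ι,
          √‖x p.1‖ * sqrtNormMulStar x p.1 p.2 * pathWeight x p.2 (List.ofFn w) := by
        gcongr with p _ w _
        exact norm_wordProd_cons_le_pathWeight x p _
    _ = _ := by
        simp only [← Finset.mul_sum, sum_pathWeight, ← mulVec_mulVec]
        simp only [mulVec, dotProduct, Finset.mul_sum, Fintype.sum_prod_type, mul_assoc]

variable [CStarRing R]

theorem norm_mul_star_pow_succ_le_card_mul (m : ℕ) :
    ‖((∑ i, x i) * star (∑ i, x i)) ^ (m + 1)‖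
      ≤ Fintype.card ι * (‖toEuclideanCLM (𝕜 := ℝ) (sqrtNormMulStar x)‖
          * ‖toEuclideanCLM (𝕜 := ℝ) (sqrtNormStarMul x)‖) ^ (m + 1) := by
  set A := toEuclideanCLM (𝕜 := ℝ) (sqrtNormMulStar x)
  set B := toEuclideanCLM (𝕜 := ℝ) (sqrtNormStarMul x)
  have htrace : ∑ j, ‖x j‖ ≤ Fintype.card ι * ‖B‖ := by
    calc ∑ j, ‖x j‖ = ∑ j, sqrtNormStarMul x j j := by simp only [sqrtNormStarMul_apply_self]
      _ ≤ ∑ _j : ι, ‖B‖ := Finset.sum_le_sum fun j _ => apply_self_le_norm_toEuclideanCLM _ j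
      _ = Fintype.card ι * ‖B‖ := by simp
  calc ‖((∑ i, x i) * star (∑ i, x i)) ^ (m + 1)‖
      ≤ ‖A * (B * A) ^ m‖ * ∑ j, √‖x j‖ ^ 2 := by
        grw [norm_mul_star_pow_succ_le, dotProduct_mulVec_le_norm_toEuclideanCLM]
        simp only [A, B, map_mul, map_pow, le_refl]
    _ ≤ ‖A‖ ^ (m + 1) * ‖B‖ ^ m * (Fintype.card ι * ‖B‖) := by
        simp only [Real.sq_sqrt (norm_nonneg _)]
        grw [norm_mul_mul_pow_le, htrace]
    _ = Fintype.card ι * (‖A‖ * ‖B‖) ^ (m + 1) := by ring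

theorem sq_norm_sum_le :
    ‖∑ i, x i‖ ^ 2 ≤ ‖toEuclideanCLM (𝕜 := ℝ) (sqrtNormMulStar x)‖
      * ‖toEuclideanCLM (𝕜 := ℝ) (sqrtNormStarMul x)‖ := by
  refine le_of_frequently_pow_le_mul_pow (C := Fintype.card ι) (by positivity) ?_
  refine (tendsto_pow_atTop_atTop_of_one_lt one_lt_two).frequently
    (Frequently.of_forall fun k => ?_)
  obtain ⟨m, hm⟩ : ∃ m, 2 ^ k = m + 1 := Nat.exists_eq_add_one.2 (Nat.two_pow_pos k)
  rw [sq, ← CStarRing.norm_self_mul_star, ← (IsSelfAdjoint.mul_star_self _).norm_pow_two_pow, hm]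
  exact norm_mul_star_pow_succ_le_card_mul x m

end CotlarStein

end

open ContinuousLinearMap

/-- **Calderón–Vaillancourt sharpening of the Cotlar–Stein lemma.**
`‖∑ T k‖² ≤ ‖a‖ ‖b‖` where `a j k = √‖T j (T k)†‖` and `b j k = √‖(T j)† T k‖`,
with matrix norms taken as operators on Euclidean `n`-space. -/
theorem improved_cotlar_stein {H : Type*} [NormedAddCommGroup H] [InnerProductSpace ℂ H]
    [CompleteSpace H] {n : ℕ} (T : Fin n → (H →L[ℂ] H))
    (a b : Matrix (Fin n) (Fin n) ℝ)
    (ha : ∀ j k, a j k = Real.sqrt ‖T j * adjoint (T k)‖)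
    (hb : ∀ j k, b j k = Real.sqrt ‖adjoint (T j) * T k‖) :
    ‖∑ k, T k‖ ^ 2 ≤
      ‖Matrix.toEuclideanCLM (𝕜 := ℝ) a‖ * ‖Matrix.toEuclideanCLM (𝕜 := ℝ) b‖ := by
  have hA : a = CotlarStein.sqrtNormMulStar T := by
    ext j k
    rw [ha, CotlarStein.sqrtNormMulStar, Matrix.of_apply, star_eq_adjoint]
  have hB : b = CotlarStein.sqrtNormStarMul T := by
    ext j k
    rw [hb, CotlarStein.sqrtNormStarMul, Matrix.of_apply, star_eq_adjoint]
  rw [hA, hB]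
  exact CotlarStein.sq_norm_sum_le T
end

section
/- Let (T_k)_{k∈ℕ} be a sequence of bounded linear operators on a complex Hilbert space H, and suppose there exist constants A, B ≥ 0 such that for every j, ∑_{k} √‖T_j* T_k‖ ≤ A and ∑_{k} √‖T_j T_k*‖ ≤ B (in particular these series converge). Then for every vector x ∈ H the partial sums ∑_{k=1}^n T_k x converge in H as n → ∞, and the resulting limit operator S (defined by S x = lim_n ∑_{k=1}^n T_k x) is a bounded linear operator with ‖S‖² ≤ A·B. -/
/-!
Expanding `(S⋆S)^m` for `S = ∑ Tⱼ` gives a sum of alternating words `Tⱼ₁⋆ Tⱼ₂ ⋯ Tⱼ₂ₘ`. Bracketing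
such a word into consecutive pairs in the two possible ways and taking the geometric mean bounds
its norm by `√‖Tⱼ₁‖ √‖Tⱼ₂ₘ‖` times the product of `√‖X Y‖` over consecutive letters `X Y`.
Summing over the last index, then the one before, and so on uses the two hypotheses alternately
and, since `‖Tⱼ‖ ≤ B`, gives `‖(S⋆S)^m‖ ≤ N (AB)^m` for `N` summands. As `S⋆S` is self-adjoint,
`‖S‖^(2^(n+1)) = ‖(S⋆S)^(2^n)‖`; letting `n → ∞` gives `‖S‖² ≤ AB` for every finite partial sum. These uniform bounds make the set of vectors on which the partial sums are
Cauchy a closed subspace. It contains every `T_m⋆ y`, because `∑ₖ ‖Tₖ T_m⋆‖ < ∞`, so every vector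
orthogonal to it is killed by all `Tₖ` and lies in it as well; hence it is the whole space.
-/

open ContinuousLinearMap Filter Topology Finset

theorem le_of_forall_pow_two_pow_le_mul_pow {x y K : ℝ} (hy : 0 ≤ y)
    (h : ∀ n : ℕ, x ^ 2 ^ n ≤ K * y ^ 2 ^ n) : x ≤ y := by
  by_contra! hlt
  have hx : 0 < x := hy.trans_lt hlt
  have hlim : Tendsto (fun n : ℕ => K * (y / x) ^ 2 ^ n) atTop (𝓝 0) := by
    simpa using ((tendsto_pow_atTop_nhds_zero_of_lt_one (div_nonneg hy hx.le)
      ((div_lt_one hx).2 hlt)).comp (tendsto_pow_atTop_atTop_of_one_lt one_lt_two)).const_mul K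
  obtain ⟨n, hn⟩ := (hlim.eventually (gt_mem_nhds one_pos)).exists
  rw [div_pow, ← mul_div_assoc, div_lt_one (pow_pos hx _)] at hn
  exact (h n).not_gt hn

theorem summable_of_summable_sqrt {ι : Type*} {f : ι → ℝ} (hf : ∀ i, 0 ≤ f i)
    (h : Summable fun i => √(f i)) : Summable f := by
  refine Summable.of_norm_bounded_eventually h ?_
  filter_upwards [h.tendsto_cofinite_zero.eventually (ge_mem_nhds one_pos)] with i hi
  calc ‖f i‖ = √(f i) * √(f i) := by rw [Real.norm_of_nonneg (hf i), Real.mul_self_sqrt (hf i)]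
    _ ≤ √(f i) := mul_le_of_le_one_left (Real.sqrt_nonneg _) hi

namespace CotlarStein

section Words

variable {ι : Type*} (F : Finset ι)

def wordSum {M : Type*} [AddCommMonoid M] : ℕ → (List ι → M) → M
  | 0, f => f []
  | n + 1, f => ∑ j ∈ F, wordSum n fun l => f (j :: l)

theorem norm_wordSum_le {M : Type*} [SeminormedAddCommGroup M] (n : ℕ) (f : List ι → M) :
    ‖wordSum F n f‖ ≤ wordSum F n fun l => ‖f l‖ := by
  induction n generalizing f with
  | zero => exact le_rfl
  | succ n ih => exact (norm_sum_le _ _).trans (sum_le_sum fun j _ => ih _)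

theorem wordSum_mono {f g : List ι → ℝ} (h : ∀ l, f l ≤ g l) (n : ℕ) :
    wordSum F n f ≤ wordSum F n g := by
  induction n generalizing f g with
  | zero => exact h []
  | succ n ih => exact sum_le_sum fun j _ => ih fun l => h (j :: l)

theorem wordSum_nonneg {f : List ι → ℝ} (h : ∀ l, 0 ≤ f l) (n : ℕ) : 0 ≤ wordSum F n f := by
  induction n generalizing f with
  | zero => exact h []
  | succ n ih => exact sum_nonneg fun j _ => ih fun l => h (j :: l)

theorem mul_wordSum {R : Type*} [NonUnitalNonAssocSemiring R] (c : R) (n : ℕ) (f : List ι → R) :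
    c * wordSum F n f = wordSum F n fun l => c * f l := by
  induction n generalizing f with
  | zero => rfl
  | succ n ih => simp only [wordSum, mul_sum, ih]

variable {R : Type*} [NormedRing R]

def altProd (u v : ι → R) : ι → List ι → R
  | j, [] => u j
  | j, k :: l => u j * altProd v u k l

theorem sum_wordSum_altProd_succ (u v : ι → R) (n : ℕ) :
    ∑ j ∈ F, wordSum F (n + 1) (altProd u v j) =
      (∑ j ∈ F, u j) * ∑ k ∈ F, wordSum F n (altProd v u k) := by
  rw [sum_mul]
  refine sum_congr rfl fun j _ => ?_
  rw [mul_sum]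
  exact sum_congr rfl fun k _ => (mul_wordSum F (u j) n _).symm

theorem sum_mul_sum_pow_succ_eq_sum_wordSum (u v : ι → R) (m : ℕ) :
    ((∑ j ∈ F, u j) * ∑ j ∈ F, v j) ^ (m + 1) =
      ∑ j ∈ F, wordSum F (2 * m + 1) (altProd u v j) := by
  induction m with
  | zero => simp [wordSum, altProd, sum_mul_sum]
  | succ m ih =>
    rw [show 2 * (m + 1) + 1 = 2 * m + 1 + 1 + 1 by ring,
      sum_wordSum_altProd_succ F u v (2 * m + 2), sum_wordSum_altProd_succ F v u (2 * m + 1), ← ih,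
      pow_succ', mul_assoc]

def pairNorm (u v : ι → R) : ι → List ι → ℝ
  | j, [] => ‖u j‖
  | j, [k] => ‖u j * v k‖
  | j, k :: i :: l => ‖u j * v k‖ * pairNorm u v i l

noncomputable def chainWeight (u v : ι → R) : ι → List ι → ℝ
  | j, [] => √‖u j‖
  | j, k :: l => √‖u j * v k‖ * chainWeight v u k l

theorem chainWeight_nonneg (u v : ι → R) (j : ι) (l : List ι) : 0 ≤ chainWeight u v j l := by
  induction l generalizing u v j with
  | nil => exact Real.sqrt_nonneg _
  | cons k l ih => exact mul_nonneg (Real.sqrt_nonneg _) (ih _ _ _)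

theorem norm_altProd_le_pairNorm (u v : ι → R) : ∀ j l, ‖altProd u v j l‖ ≤ pairNorm u v j l
  | j, [] => le_rfl
  | j, [k] => le_rfl
  | j, k :: i :: l => by
    rw [altProd, altProd, ← mul_assoc, pairNorm]
    exact (norm_mul_le _ _).trans
      (mul_le_mul_of_nonneg_left (norm_altProd_le_pairNorm u v i l) (norm_nonneg _))

theorem pairNorm_mul_pairNorm_eq_chainWeight_sq (u v : ι → R) :
    ∀ j k l, pairNorm u v j (k :: l) * pairNorm v u k l = chainWeight u v j (k :: l) ^ 2
  | j, k, [] => by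
    simp only [pairNorm, chainWeight, mul_pow, Real.sq_sqrt (norm_nonneg _)]
  | j, k, i :: l => by
    rw [pairNorm, mul_assoc, mul_comm (pairNorm u v i l),
      pairNorm_mul_pairNorm_eq_chainWeight_sq v u k i l]
    simp only [chainWeight, mul_pow, Real.sq_sqrt (norm_nonneg _)]

theorem norm_altProd_le (u v : ι → R) (j : ι) : ∀ l,
    ‖altProd u v j l‖ ≤ √‖u j‖ * chainWeight u v j l
  | [] => (Real.mul_self_sqrt (norm_nonneg _)).ge
  | k :: l => by
    refine le_of_pow_le_pow_left₀ two_ne_zero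
      (mul_nonneg (Real.sqrt_nonneg _) (chainWeight_nonneg _ _ _ _)) ?_
    calc ‖altProd u v j (k :: l)‖ ^ 2
        ≤ (‖u j‖ * pairNorm v u k l) * pairNorm u v j (k :: l) := by
          rw [sq]
          refine mul_le_mul ?_ (norm_altProd_le_pairNorm u v j _) (norm_nonneg _)
            (mul_nonneg (norm_nonneg _) ((norm_nonneg _).trans (norm_altProd_le_pairNorm v u k l)))
          rw [altProd]
          exact (norm_mul_le _ _).trans
            (mul_le_mul_of_nonneg_left (norm_altProd_le_pairNorm v u k l) (norm_nonneg _))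
      _ = (√‖u j‖ * chainWeight u v j (k :: l)) ^ 2 := by
          rw [mul_assoc, mul_comm (pairNorm v u k l), pairNorm_mul_pairNorm_eq_chainWeight_sq,
            mul_pow, Real.sq_sqrt (norm_nonneg _)]

theorem wordSum_chainWeight_le {u v : ι → R} {A B C : ℝ}
    (hu : ∀ j ∈ F, ∑ k ∈ F, √‖u j * v k‖ ≤ A) (hv : ∀ j ∈ F, ∑ k ∈ F, √‖v j * u k‖ ≤ B)
    (huC : ∀ j ∈ F, ‖u j‖ ≤ C) (hvC : ∀ j ∈ F, ‖v j‖ ≤ C) (n : ℕ) {j : ι} (hj : j ∈ F) :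
    wordSum F n (chainWeight u v j) ≤ √C * (A ^ ((n + 1) / 2) * B ^ (n / 2)) := by
  induction n generalizing u v A B j with
  | zero => simpa [wordSum, chainWeight] using Real.sqrt_le_sqrt (huC j hj)
  | succ n ih =>
    have hA : 0 ≤ A := (sum_nonneg fun _ _ => Real.sqrt_nonneg _).trans (hu j hj)
    have hB : 0 ≤ B := (sum_nonneg fun _ _ => Real.sqrt_nonneg _).trans (hv j hj)
    calc wordSum F (n + 1) (chainWeight u v j)
        = ∑ k ∈ F, √‖u j * v k‖ * wordSum F n (chainWeight v u k) := by
          simp only [wordSum, chainWeight, mul_wordSum]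
      _ ≤ ∑ k ∈ F, √‖u j * v k‖ * (√C * (B ^ ((n + 1) / 2) * A ^ (n / 2))) :=
          sum_le_sum fun k hk =>
            mul_le_mul_of_nonneg_left (ih hv hu hvC huC hk) (Real.sqrt_nonneg _)
      _ ≤ A * (√C * (B ^ ((n + 1) / 2) * A ^ (n / 2))) := by
          rw [← sum_mul]; gcongr; exact hu j hj
      _ = √C * (A ^ ((n + 1 + 1) / 2) * B ^ ((n + 1) / 2)) := by
          rw [show (n + 1 + 1) / 2 = n / 2 + 1 by omega]; ring

theorem norm_sum_wordSum_altProd_le {u v : ι → R} {A B C : ℝ}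
    (hu : ∀ j ∈ F, ∑ k ∈ F, √‖u j * v k‖ ≤ A) (hv : ∀ j ∈ F, ∑ k ∈ F, √‖v j * u k‖ ≤ B)
    (huC : ∀ j ∈ F, ‖u j‖ ≤ C) (hvC : ∀ j ∈ F, ‖v j‖ ≤ C) (n : ℕ) :
    ‖∑ j ∈ F, wordSum F n (altProd u v j)‖ ≤ #F * (C * (A ^ ((n + 1) / 2) * B ^ (n / 2))) := by
  rw [← nsmul_eq_mul, ← sum_const]
  refine (norm_sum_le _ _).trans (sum_le_sum fun j hj => ?_)
  have hC : 0 ≤ C := (norm_nonneg _).trans (huC j hj)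
  calc ‖wordSum F n (altProd u v j)‖
      ≤ wordSum F n fun l => √‖u j‖ * chainWeight u v j l :=
        (norm_wordSum_le F n _).trans (wordSum_mono F (norm_altProd_le u v j) n)
    _ ≤ √C * (√C * (A ^ ((n + 1) / 2) * B ^ (n / 2))) := by
        rw [← mul_wordSum]
        exact mul_le_mul (Real.sqrt_le_sqrt (huC j hj))
          (wordSum_chainWeight_le F hu hv huC hvC n hj)
          (wordSum_nonneg F (chainWeight_nonneg u v j) n) (Real.sqrt_nonneg _)
    _ = C * (A ^ ((n + 1) / 2) * B ^ (n / 2)) := by rw [← mul_assoc, Real.mul_self_sqrt hC]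

end Words

theorem norm_sum_sq_le {ι E : Type*} [NormedRing E] [StarRing E] [CStarRing E] {a : ι → E}
    {F : Finset ι} {A B : ℝ} (hA0 : 0 ≤ A) (hB0 : 0 ≤ B)
    (hA : ∀ j ∈ F, ∑ k ∈ F, √‖star (a j) * a k‖ ≤ A)
    (hB : ∀ j ∈ F, ∑ k ∈ F, √‖a j * star (a k)‖ ≤ B) :
    ‖∑ j ∈ F, a j‖ ^ 2 ≤ A * B := by
  have hnorm : ∀ j ∈ F, ‖a j‖ ≤ B := fun j hj => by
    simpa [CStarRing.norm_self_mul_star] using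
      (single_le_sum (fun k _ => Real.sqrt_nonneg ‖a j * star (a k)‖) hj).trans (hB j hj)
  set s := ∑ j ∈ F, a j
  have hpow : ∀ m, ‖(star s * s) ^ (m + 1)‖ ≤ #F * (A * B) ^ (m + 1) := fun m => by
    rw [star_sum, sum_mul_sum_pow_succ_eq_sum_wordSum]
    refine (norm_sum_wordSum_altProd_le F hA hB (by simpa using hnorm) hnorm _).trans_eq ?_
    rw [show (2 * m + 1 + 1) / 2 = m + 1 by omega, show (2 * m + 1) / 2 = m by omega]
    ring
  rw [sq, ← CStarRing.norm_star_mul_self]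
  refine le_of_forall_pow_two_pow_le_mul_pow (mul_nonneg hA0 hB0) (K := #F) fun n => ?_
  obtain ⟨m, hm⟩ := Nat.exists_eq_add_one.mpr (Nat.two_pow_pos n)
  rw [← (IsSelfAdjoint.star_mul_self s).norm_pow_two_pow, hm]
  exact hpow m

end CotlarStein

namespace ContinuousLinearMap

variable {𝕜 E F : Type*} [NontriviallyNormedField 𝕜] [NormedAddCommGroup E] [NormedSpace 𝕜 E]
  [NormedAddCommGroup F] [NormedSpace 𝕜 F]

def cauchySeqSubmodule (P : ℕ → E →L[𝕜] F) : Submodule 𝕜 E where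
  carrier := {x | CauchySeq fun n => P n x}
  add_mem' {x y} hx hy := by
    show CauchySeq fun n => P n (x + y)
    simp only [map_add]
    exact hx.add hy
  zero_mem' := by
    show CauchySeq fun n => P n 0
    simpa only [map_zero] using cauchySeq_const (0 : F)
  smul_mem' c x hx := by
    show CauchySeq fun n => P n (c • x)
    simp only [map_smul]
    exact (uniformContinuous_const_smul c).comp_cauchySeq hx

theorem mem_cauchySeqSubmodule {P : ℕ → E →L[𝕜] F} {x : E} :
    x ∈ cauchySeqSubmodule P ↔ CauchySeq fun n => P n x := Iff.rfl

theorem isClosed_cauchySeqSubmodule {P : ℕ → E →L[𝕜] F} {L : ℝ} (hP : ∀ n, ‖P n‖ ≤ L) :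
    IsClosed (cauchySeqSubmodule P : Set E) := by
  refine isClosed_of_closure_subset fun x hx => Metric.cauchySeq_iff.2 fun ε hε => ?_
  have hL : 0 < L + 1 := by linarith [(norm_nonneg _).trans (hP 0)]
  obtain ⟨w, hw, hxw⟩ := Metric.mem_closure_iff.1 hx (ε / (3 * (L + 1))) (by positivity)
  obtain ⟨N, hN⟩ := Metric.cauchySeq_iff.1 hw (ε / 3) (by positivity)
  have hclose : ∀ n, dist (P n x) (P n w) < ε / 3 := fun n => by
    rw [dist_eq_norm, ← map_sub]
    calc ‖P n (x - w)‖ ≤ (L + 1) * dist x w := by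
          rw [dist_eq_norm]; exact (le_opNorm _ _).trans (by gcongr; linarith [hP n])
      _ < (L + 1) * (ε / (3 * (L + 1))) := by gcongr
      _ = ε / 3 := by field_simp
  refine ⟨N, fun m hm n hn => ?_⟩
  calc dist (P m x) (P n x)
      ≤ dist (P m x) (P m w) + dist (P m w) (P n w) + dist (P n w) (P n x) := dist_triangle4 ..
    _ < ε / 3 + ε / 3 + ε / 3 := by
      gcongr
      · exact hclose m
      · exact hN m hm n hn
      · rw [dist_comm]; exact hclose n
    _ = ε := by ring

theorem exists_tendsto_of_cauchySeq [CompleteSpace F] {P : ℕ → E →L[𝕜] F} {L : ℝ}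
    (hP : ∀ n, ‖P n‖ ≤ L) (h : ∀ x, CauchySeq fun n => P n x) :
    ∃ S : E →L[𝕜] F, (∀ x, Tendsto (fun n => P n x) atTop (𝓝 (S x))) ∧ ‖S‖ ≤ L := by
  choose f hf using fun x => cauchySeq_tendsto_of_complete (h x)
  have hfP : Tendsto (fun n x => P n x) atTop (𝓝 f) := tendsto_pi_nhds.2 hf
  have hbound : ∀ x, ‖f x‖ ≤ L * ‖x‖ := fun x =>
    le_of_tendsto (hf x).norm (Eventually.of_forall fun n => (P n).le_of_opNorm_le (hP n) x)
  refine ⟨(linearMapOfTendsto f (fun n => (P n : E →ₗ[𝕜] F)) hfP).mkContinuous L hbound, hf,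
    LinearMap.mkContinuous_norm_le _ ((norm_nonneg _).trans (hP 0)) _⟩

end ContinuousLinearMap

section Adjoint

variable {𝕜 H K : Type*} [RCLike 𝕜] [NormedAddCommGroup H] [InnerProductSpace 𝕜 H]
  [CompleteSpace H] [NormedAddCommGroup K] [InnerProductSpace 𝕜 K] [CompleteSpace K]

theorem cauchySeqSubmodule_sum_eq_top {T : ℕ → H →L[𝕜] K} {L : ℝ}
    (hP : ∀ n, ‖∑ k ∈ range n, T k‖ ≤ L)
    (hT : ∀ m y, CauchySeq fun n => ∑ k ∈ range n, T k (adjoint (T m) y)) :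
    cauchySeqSubmodule (fun n => ∑ k ∈ range n, T k) = ⊤ := by
  rw [← (isClosed_cauchySeqSubmodule hP).submodule_topologicalClosure_eq,
    Submodule.topologicalClosure_eq_top_iff, Submodule.eq_bot_iff]
  intro y hy
  have hTy : ∀ m, T m y = 0 := fun m => by
    rw [← inner_self_eq_zero (𝕜 := 𝕜), ← adjoint_inner_left]
    exact (Submodule.mem_orthogonal _ y).1 hy _
      (by simpa [mem_cauchySeqSubmodule] using hT m (T m y))
  have hyC : y ∈ cauchySeqSubmodule fun n => ∑ k ∈ range n, T k := by
    simpa [mem_cauchySeqSubmodule, hTy] using cauchySeq_const (0 : K)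
  exact inner_self_eq_zero.1 ((Submodule.mem_orthogonal' _ y).1 hy y hyC)

theorem summable_norm_apply_adjoint {ι : Type*} {T : ι → H →L[𝕜] H} {m : ι}
    (h : Summable fun k => √‖T m * adjoint (T k)‖) (y : H) :
    Summable fun k => ‖T k (adjoint (T m) y)‖ := by
  have hnorm : ∀ k, ‖T k * adjoint (T m)‖ = ‖T m * adjoint (T k)‖ := fun k => by
    rw [← norm_star, star_mul, star_eq_adjoint, star_eq_adjoint, adjoint_adjoint]
  refine ((summable_of_summable_sqrt (fun _ => norm_nonneg _) h).mul_right ‖y‖).of_nonneg_of_le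
    (fun _ => norm_nonneg _) fun k => ?_
  rw [← hnorm]
  exact (T k * adjoint (T m)).le_opNorm y

end Adjoint

/-- **Cotlar–Stein lemma for infinite sums.** If `∑_k √‖(T j)† T k‖ ≤ A` and
`∑_k √‖T j (T k)†‖ ≤ B` for every `j`, then `∑_k T k` converges in the strong
operator topology to an operator `S` with `‖S‖² ≤ A * B`. -/
theorem cotlar_stein_infinite {H : Type*} [NormedAddCommGroup H] [InnerProductSpace ℂ H]
    [CompleteSpace H] (T : ℕ → (H →L[ℂ] H)) (A B : ℝ) (hA : 0 ≤ A) (hB : 0 ≤ B)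
    (hsumA : ∀ j, Summable fun k => Real.sqrt ‖adjoint (T j) * T k‖)
    (hleA : ∀ j, (∑' k, Real.sqrt ‖adjoint (T j) * T k‖) ≤ A)
    (hsumB : ∀ j, Summable fun k => Real.sqrt ‖T j * adjoint (T k)‖)
    (hleB : ∀ j, (∑' k, Real.sqrt ‖T j * adjoint (T k)‖) ≤ B) :
    ∃ S : H →L[ℂ] H,
      (∀ x : H, Filter.Tendsto (fun n => ∑ k ∈ Finset.range n, T k x)
        Filter.atTop (nhds (S x))) ∧
      ‖S‖ ^ 2 ≤ A * B := by
  have hPle : ∀ n, ‖∑ k ∈ range n, T k‖ ≤ √(A * B) := fun n =>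
    Real.le_sqrt_of_sq_le <| CotlarStein.norm_sum_sq_le hA hB
      (fun j _ => by simpa only [star_eq_adjoint] using
        ((hsumA j).sum_le_tsum _ fun k _ => Real.sqrt_nonneg _).trans (hleA j))
      (fun j _ => by simpa only [star_eq_adjoint] using
        ((hsumB j).sum_le_tsum _ fun k _ => Real.sqrt_nonneg _).trans (hleB j))
  have htop := cauchySeqSubmodule_sum_eq_top hPle fun m y => by
    simpa only [_root_.sum_apply] using
      (summable_norm_apply_adjoint (hsumB m) y).of_norm.hasSum.tendsto_sum_nat.cauchySeq
  obtain ⟨S, hS, hSle⟩ := exists_tendsto_of_cauchySeq hPle fun x =>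
    mem_cauchySeqSubmodule.1 (Submodule.eq_top_iff'.1 htop x)
  refine ⟨S, fun x => by simpa only [_root_.sum_apply] using hS x, ?_⟩
  calc ‖S‖ ^ 2 ≤ √(A * B) ^ 2 := by gcongr
    _ = A * B := Real.sq_sqrt (mul_nonneg hA hB)
end
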